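/- arXiv:1608.02837 — 4 statements merged into one kernel-verified Lean document; each statement's English description precedes it below -/
import Mathlib

section
/- Let S be a zerosumfree semiring whose only strongly subtractive left ideals are the zero ideal and S itself. Then S is entire: for all a, b ∈ S, a·b = 0 implies a = 0 or b = 0. -/
universe u

/-- A left ideal `I` of a semiring `S` (an `S`-subsemimodule of `S`) is strongly
subtractive if `a + b ∈ I` implies `a ∈ I` and `b ∈ I`. -/
def StronglySubtractive {S : Type u} [Semiring S] (I : Submodule S S) : Prop :=
  ∀ a b : S, a + b ∈ I → a ∈ I ∧ b ∈ I

/-- Lemma 4.2: a zerosumfree semiring whose only strongly subtractive left ideals are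
`0` and `S` is entire. -/
theorem entire_of_zerosumfree_trivial_strongly_subtractive {S : Type u} [Semiring S]
    (hzs : ∀ a b : S, a + b = 0 → a = 0 ∧ b = 0)
    (hid : ∀ I : Submodule S S, StronglySubtractive I → I = ⊥ ∨ I = ⊤) :
    ∀ a b : S, a * b = 0 → a = 0 ∨ b = 0 := by
  intro a b hab
  set I : Submodule S S :=
    { carrier := {x | x * b = 0}
      add_mem' := fun {x y} hx hy => by
        simp only [Set.mem_setOf_eq] at *
        rw [add_mul, hx, hy, add_zero]
      zero_mem' := by simp
      smul_mem' := fun c x hx => by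
        simp only [Set.mem_setOf_eq, smul_eq_mul] at *
        rw [mul_assoc, hx, mul_zero] } with hI
  have hss : StronglySubtractive I := by
    intro x y hxy
    have : x * b + y * b = 0 := by
      have := hxy
      simp only [hI, Submodule.mem_mk, AddSubmonoid.mem_mk, AddSubsemigroup.mem_mk,
        Set.mem_setOf_eq] at this ⊢
      rwa [← add_mul]
    obtain ⟨h1, h2⟩ := hzs _ _ this
    exact ⟨h1, h2⟩
  rcases hid I hss with h | h
  · left
    have ha : a ∈ I := hab
    rw [h] at ha
    simpa using ha
  · right
    have : (1 : S) ∈ I := h ▸ Submodule.mem_top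
    have hb : (1:S) * b = 0 := this
    rwa [one_mul] at hb
end

section
/- Let D be an additively idempotent division semiring. Every finite left D-semimodule (i.e., one whose underlying set is finite) is e-injective. -/
/-!
Over an additively idempotent semiring every semimodule is idempotent, so a subtractive
subsemimodule `A ≤ B` satisfies `b + b' ∈ A → b' ∈ A`. In a finite idempotent semimodule `M` the
sum `T` of all elements absorbs everything, and over a division semiring it is fixed by every
nonzero scalar. Hence any linear `φ : A → M` extends to `B` by sending `B \ A` to `T`, and
two maps agreeing on `A` become equal after adding the extension `χ` of `0`, which vanishes on `A`
and absorbs everything off `A`.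
-/

universe u v w w'

/-- A subsemimodule `A ≤ B` is subtractive if `m ∈ A` and `m + m' ∈ A` imply `m' ∈ A`. -/
def IsSubtractive {S : Type u} [Semiring S] {B : Type v} [AddCommMonoid B] [Module S B]
    (A : Submodule S B) : Prop :=
  ∀ m m' : B, m ∈ A → m + m' ∈ A → m' ∈ A

/-- A left `S`-semimodule `M` is e-injective if for every semimodule `B` and every
subtractive subsemimodule `A ≤ B`, every linear map `A → M` extends to `B`, and any two
linear maps `B → M` agreeing on `A` differ by maps vanishing on `A`. -/
def EInjective (S : Type u) [Semiring S] (M : Type v) [AddCommMonoid M] [Module S M] : Prop :=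
  ∀ (B : Type w) [AddCommMonoid B] [Module S B] (A : Submodule S B), IsSubtractive A →
    ((∀ φ : A →ₗ[S] M, ∃ ψ : B →ₗ[S] M, ∀ a : A, ψ (a : B) = φ a) ∧
     (∀ ψ₁ ψ₂ : B →ₗ[S] M, (∀ a ∈ A, ψ₁ a = ψ₂ a) →
       ∃ χ₁ χ₂ : B →ₗ[S] M, (∀ a ∈ A, χ₁ a = 0) ∧ (∀ a ∈ A, χ₂ a = 0) ∧
         ψ₁ + χ₁ = ψ₂ + χ₂))

/-- A left `S`-semimodule `M` is injective if every linear map into `M` extends along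
every injective linear map. -/
def SInjective (S : Type u) [Semiring S] (M : Type v) [AddCommMonoid M] [Module S M] : Prop :=
  ∀ (A : Type w) (B : Type w') [AddCommMonoid A] [Module S A] [AddCommMonoid B] [Module S B]
    (μ : A →ₗ[S] B), Function.Injective μ →
    ∀ φ : A →ₗ[S] M, ∃ ψ : B →ₗ[S] M, ∀ a : A, ψ (μ a) = φ a

theorem add_self_of_one_add_one {S M : Type*} [Semiring S] [AddCommMonoid M] [Module S M]
    (h : (1 : S) + 1 = 1) (m : M) : m + m = m := by
  rw [← two_smul S m, ← one_add_one_eq_two, h, one_smul]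

theorem IsSubtractive.mem_of_add_mem {S B : Type*} [Semiring S] [AddCommMonoid B] [Module S B]
    {A : Submodule S B} (hA : IsSubtractive A) (hB : ∀ b : B, b + b = b) {b b' : B}
    (h : b + b' ∈ A) : b' ∈ A :=
  hA (b + b') b' h (by rwa [add_assoc, hB])

theorem add_sum_univ_of_add_self {M : Type*} [AddCommMonoid M] [Fintype M]
    (hM : ∀ m : M, m + m = m) (m : M) : m + ∑ x : M, x = ∑ x : M, x := by
  classical
  rw [← Finset.add_sum_erase _ _ (Finset.mem_univ m), ← add_assoc, hM]

theorem smul_sum_univ_of_ne_zero {D M : Type*} [DivisionSemiring D] [AddCommMonoid M]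
    [Module D M] [Fintype M] {s : D} (hs : s ≠ 0) : s • ∑ x : M, x = ∑ x : M, x := by
  rw [Finset.smul_sum]
  exact Equiv.sum_comp (MulAction.toPerm (Units.mk0 s hs)) id

namespace Submodule

variable {D B M : Type*} [DivisionSemiring D] [AddCommMonoid B] [Module D B]
  [AddCommMonoid M] [Module D M] {A : Submodule D B} (hA : ∀ b b' : B, b + b' ∈ A → b' ∈ A)
  {T : M} (hT : ∀ m : M, m + T = T) (hTs : ∀ s : D, s ≠ 0 → s • T = T)

open scoped Classical in
noncomputable def extendByAbsorbing (φ : A →ₗ[D] M) : B →ₗ[D] M where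
  toFun b := if h : b ∈ A then φ ⟨b, h⟩ else T
  map_add' b b' := by
    by_cases hbb' : b + b' ∈ A
    · have hb : b ∈ A := hA b' b (by rwa [add_comm])
      rw [dif_pos hbb', dif_pos hb, dif_pos (hA b b' hbb'), ← map_add]
      rfl
    rw [dif_neg hbb']
    by_cases hb : b ∈ A
    · have hb' : b' ∉ A := fun hb' => hbb' (A.add_mem hb hb')
      rw [dif_pos hb, dif_neg hb', hT]
    · rw [dif_neg hb, add_comm, hT]
  map_smul' s b := by
    rw [RingHom.id_apply]
    rcases eq_or_ne s 0 with rfl | hs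
    · rw [zero_smul, zero_smul, dif_pos A.zero_mem]
      exact map_zero φ
    by_cases hb : b ∈ A
    · rw [dif_pos (A.smul_mem s hb), dif_pos hb, ← map_smul]
      rfl
    · rw [dif_neg (mt (A.smul_mem_iff hs).mp hb), dif_neg hb, hTs s hs]

theorem extendByAbsorbing_apply_of_mem (φ : A →ₗ[D] M) {b : B} (hb : b ∈ A) :
    extendByAbsorbing hA hT hTs φ b = φ ⟨b, hb⟩ :=
  dif_pos hb

theorem extendByAbsorbing_apply_of_notMem (φ : A →ₗ[D] M) {b : B} (hb : b ∉ A) :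
    extendByAbsorbing hA hT hTs φ b = T :=
  dif_neg hb

theorem add_extendByAbsorbing_zero_eq {ψ₁ ψ₂ : B →ₗ[D] M} (h : ∀ a ∈ A, ψ₁ a = ψ₂ a) :
    ψ₁ + extendByAbsorbing hA hT hTs 0 = ψ₂ + extendByAbsorbing hA hT hTs 0 := by
  ext b
  by_cases hb : b ∈ A
  · simp [extendByAbsorbing_apply_of_mem hA hT hTs _ hb, h b hb]
  · simp [extendByAbsorbing_apply_of_notMem hA hT hTs _ hb, hT]

end Submodule

/-- Theorem 4.4(4): every finite semimodule over an additively idempotent division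
semiring is e-injective. -/
theorem eInjective_of_finite_of_divisionSemiring {D : Type u} [DivisionSemiring D]
    (hai : ∀ a : D, a + a = a)
    (M : Type v) [AddCommMonoid M] [Module D M] [Finite M] :
    EInjective D M := by
  intro B _ _ A hA
  cases nonempty_fintype M
  have hdown : ∀ b b' : B, b + b' ∈ A → b' ∈ A := fun _ _ =>
    hA.mem_of_add_mem (add_self_of_one_add_one (hai 1))
  have hT := add_sum_univ_of_add_self (add_self_of_one_add_one (M := M) (hai 1))
  have hTs : ∀ s : D, s ≠ 0 → s • ∑ x : M, x = ∑ x : M, x := fun _ => smul_sum_univ_of_ne_zero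
  refine ⟨fun φ => ⟨A.extendByAbsorbing hdown hT hTs φ,
    fun a => A.extendByAbsorbing_apply_of_mem hdown hT hTs φ a.2⟩, fun ψ₁ ψ₂ h => ?_⟩
  have hχ : ∀ a ∈ A, A.extendByAbsorbing hdown hT hTs 0 a = 0 := fun a ha =>
    A.extendByAbsorbing_apply_of_mem hdown hT hTs 0 ha
  exact ⟨_, _, hχ, hχ, Submodule.add_extendByAbsorbing_zero_eq hdown hT hTs h⟩
end

section
/- Let S be an additively idempotent semiring. Every left S-semimodule M can be embedded in an e-injective left S-semimodule: there exist an e-injective left S-semimodule Q and an injective S-linear map M → Q. -/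
universe u v w w'

section MyAux

set_option linter.unusedSectionVars false

variable (S : Type u) [Semiring S] (M : Type v) [AddCommMonoid M] [Module S M]

/-- Additive maps from `S` to sets of `M` (with union as addition). -/
def MyQ : Type (max u v) :=
  {f : S → Set M // f 0 = ∅ ∧ ∀ x y : S, f (x + y) = f x ∪ f y}

namespace MyQ

variable {S M}

instance : Add (MyQ S M) :=
  ⟨fun f g => ⟨fun s => f.1 s ∪ g.1 s, by simp [f.2.1, g.2.1], fun x y => by
    show f.1 (x+y) ∪ g.1 (x+y) = _
    rw [f.2.2, g.2.2]; ext z; simp; tauto⟩⟩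

instance : Zero (MyQ S M) := ⟨⟨fun _ => ∅, rfl, fun _ _ => by simp⟩⟩

@[simp] lemma add_val (f g : MyQ S M) (s : S) : (f + g).1 s = f.1 s ∪ g.1 s := rfl
@[simp] lemma zero_val (s : S) : (0 : MyQ S M).1 s = ∅ := rfl

instance : AddCommMonoid (MyQ S M) where
  add_assoc f g h := Subtype.ext (funext fun s => Set.union_assoc _ _ _)
  add_comm f g := Subtype.ext (funext fun s => Set.union_comm _ _)
  zero_add f := Subtype.ext (funext fun s => Set.empty_union _)
  add_zero f := Subtype.ext (funext fun s => Set.union_empty _)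
  nsmul := nsmulRec

instance : SMul S (MyQ S M) :=
  ⟨fun t f => ⟨fun s => f.1 (s * t), by simp [f.2.1], fun x y => by
    show f.1 ((x+y)*t) = _
    rw [add_mul, f.2.2]⟩⟩

@[simp] lemma smul_val (t : S) (f : MyQ S M) (s : S) : (t • f).1 s = f.1 (s * t) := rfl

instance : Module S (MyQ S M) where
  one_smul f := Subtype.ext (funext fun s => by simp)
  mul_smul a b f := Subtype.ext (funext fun x => by simp [mul_assoc])
  smul_zero s := Subtype.ext (funext fun x => rfl)
  smul_add s f g := rfl
  add_smul s t f := Subtype.ext (funext fun x => by simp [mul_add, f.2.2])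
  zero_smul f := Subtype.ext (funext fun x => by simp [f.2.1])

end MyQ

end MyAux

section MyMain

variable {S : Type u} [Semiring S]

/-- Every module over an additively idempotent semiring is additively idempotent. -/
lemma my_idem (hai : ∀ a : S, a + a = a) {B : Type*} [AddCommMonoid B] [Module S B]
    (b : B) : b + b = b := by
  calc b + b = ((1 : S) + 1) • b := by rw [add_smul, one_smul]
  _ = b := by rw [hai 1, one_smul]

lemma my_absorb (hai : ∀ a : S, a + a = a) {B : Type*} [AddCommMonoid B] [Module S B]
    {u v x : B} (h : u + v + x = x) : u + x = x := by
  calc u + x = u + (u + v + x) := by rw [h]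
  _ = u + u + v + x := by rw [← add_assoc, ← add_assoc]
  _ = x := by rw [my_idem hai u, h]

lemma my_add_eq_iff (hai : ∀ a : S, a + a = a) {B : Type*} [AddCommMonoid B] [Module S B]
    (u v x : B) : u + v + x = x ↔ (u + x = x ∧ v + x = x) := by
  constructor
  · intro h
    exact ⟨my_absorb hai h, my_absorb hai (by rwa [add_comm u v] at h)⟩
  · rintro ⟨h1, h2⟩
    rw [add_assoc, h2, h1]

attribute [local instance] Classical.propDecidable

variable {B : Type w} [AddCommMonoid B] [Module S B] {A : Submodule S B}

lemma my_downset (hA : IsSubtractive A) {x y : B} (hy : y ∈ A) (h : x + y = y) :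
    x ∈ A := hA y x hy (by rw [add_comm, h]; exact hy)

lemma my_splitmem (hai : ∀ a : S, a + a = a) (hA : IsSubtractive A) {u v : B}
    (h : u + v ∈ A) : u ∈ A :=
  my_downset hA h (by rw [← add_assoc, my_idem hai u])

variable (M : Type v) [AddCommMonoid M] [Module S M]

/-- The extension of an additive `F : A → Set M` to a linear map `B →ₗ[S] MyQ S M`,
filling in `univ` outside `A`. -/
noncomputable def myExt (hai : ∀ a : S, a + a = a) (hA : IsSubtractive A)
    (F : A → Set M) (hF0 : F 0 = ∅) (hFadd : ∀ a a' : A, F (a + a') = F a ∪ F a') :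
    B →ₗ[S] MyQ S M where
  toFun b := ⟨fun s => if h : s • b ∈ A then F ⟨s • b, h⟩ else Set.univ, by
      have h0 : (0 : S) • b ∈ A := by rw [zero_smul]; exact A.zero_mem
      show (if h : (0 : S) • b ∈ A then F ⟨(0 : S) • b, h⟩ else Set.univ) = ∅
      rw [dif_pos h0]
      have : (⟨(0 : S) • b, h0⟩ : A) = 0 := Subtype.ext (zero_smul S b)
      rw [this, hF0], by
      intro x y
      show (if h : (x + y) • b ∈ A then F ⟨(x + y) • b, h⟩ else Set.univ)
        = (if h : x • b ∈ A then F ⟨x • b, h⟩ else Set.univ)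
          ∪ (if h : y • b ∈ A then F ⟨y • b, h⟩ else Set.univ)
      by_cases hx : x • b ∈ A
      · by_cases hy : y • b ∈ A
        · have hxy : (x + y) • b ∈ A := by
            rw [add_smul]; exact A.add_mem hx hy
          rw [dif_pos hx, dif_pos hy, dif_pos hxy]
          have : (⟨(x + y) • b, hxy⟩ : A) = ⟨x • b, hx⟩ + ⟨y • b, hy⟩ :=
            Subtype.ext (add_smul x y b)
          rw [this, hFadd]
        · have hxy : ¬ (x + y) • b ∈ A := fun h => by
            rw [add_smul, add_comm] at h
            exact hy (my_splitmem hai hA h)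
          rw [dif_neg hxy, dif_neg hy, Set.union_univ]
      · have hxy : ¬ (x + y) • b ∈ A := fun h => by
          rw [add_smul] at h
          exact hx (my_splitmem hai hA h)
        rw [dif_neg hxy, dif_neg hx, Set.univ_union]⟩
  map_add' b b' := by
    refine Subtype.ext (funext fun s => ?_)
    show (if h : s • (b + b') ∈ A then F ⟨s • (b + b'), h⟩ else Set.univ)
      = (if h : s • b ∈ A then F ⟨s • b, h⟩ else Set.univ)
        ∪ (if h : s • b' ∈ A then F ⟨s • b', h⟩ else Set.univ)
    by_cases hx : s • b ∈ A
    · by_cases hy : s • b' ∈ A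
      · have hxy : s • (b + b') ∈ A := by
          rw [smul_add]; exact A.add_mem hx hy
        rw [dif_pos hx, dif_pos hy, dif_pos hxy]
        have : (⟨s • (b + b'), hxy⟩ : A) = ⟨s • b, hx⟩ + ⟨s • b', hy⟩ :=
          Subtype.ext (smul_add s b b')
        rw [this, hFadd]
      · have hxy : ¬ s • (b + b') ∈ A := fun h => by
          rw [smul_add, add_comm] at h
          exact hy (my_splitmem hai hA h)
        rw [dif_neg hxy, dif_neg hy, Set.union_univ]
    · have hxy : ¬ s • (b + b') ∈ A := fun h => by
        rw [smul_add] at h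
        exact hx (my_splitmem hai hA h)
      rw [dif_neg hxy, dif_neg hx, Set.univ_union]
  map_smul' t b := by
    refine Subtype.ext (funext fun s => ?_)
    show (if h : s • t • b ∈ A then F ⟨s • t • b, h⟩ else Set.univ)
      = (if h : (s * t) • b ∈ A then F ⟨(s * t) • b, h⟩ else Set.univ)
    simp only [smul_smul]

lemma myExt_val (hai : ∀ a : S, a + a = a) (hA : IsSubtractive A)
    (F : A → Set M) (hF0 : F 0 = ∅) (hFadd : ∀ a a' : A, F (a + a') = F a ∪ F a')
    (b : B) (s : S) :
    (myExt M hai hA F hF0 hFadd b).1 s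
      = if h : s • b ∈ A then F ⟨s • b, h⟩ else Set.univ := rfl


/-- The canonical embedding `M → MyQ S M`. -/
noncomputable def myIota (hai : ∀ a : S, a + a = a) : M →ₗ[S] MyQ S M where
  toFun m := ⟨fun s => {z : M | ¬ (s • m + z = z)}, by
      ext z; simp, fun x y => by
      show {z : M | ¬ ((x + y) • m + z = z)} = _
      ext z
      simp only [Set.mem_setOf_eq, Set.mem_union, add_smul]
      rw [my_add_eq_iff hai]
      tauto⟩
  map_add' m m' := Subtype.ext (funext fun s => by
    show {z : M | ¬ (s • (m + m') + z = z)}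
      = {z : M | ¬ (s • m + z = z)} ∪ {z : M | ¬ (s • m' + z = z)}
    ext z
    simp only [Set.mem_setOf_eq, Set.mem_union, smul_add]
    rw [my_add_eq_iff hai]
    tauto)
  map_smul' t m := Subtype.ext (funext fun s => by
    show {z : M | ¬ (s • t • m + z = z)} = {z : M | ¬ ((s * t) • m + z = z)}
    rw [smul_smul])

lemma myIota_inj (hai : ∀ a : S, a + a = a) : Function.Injective (myIota M hai) := by
  have key : ∀ m m' : M, myIota M hai m = myIota M hai m' → m' + m = m := by
    intro m m' h
    have h1 := congrFun (congrArg Subtype.val h) 1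
    have hm : m ∉ (myIota M hai m).1 1 := by
      show m ∉ {z : M | ¬ ((1:S) • m + z = z)}
      simp only [Set.mem_setOf_eq, not_not, one_smul]
      exact my_idem hai m
    rw [h1] at hm
    have hm' : m ∉ {z : M | ¬ ((1:S) • m' + z = z)} := hm
    simpa only [Set.mem_setOf_eq, not_not, one_smul] using hm'
  intro m m' h
  have h1 := key m m' h
  have h2 := key m' m h.symm
  rw [← h1, add_comm, h2]

end MyMain

/-- Theorem 4.5(1): over an additively idempotent semiring, every semimodule embeds in
an e-injective semimodule. -/
theorem embeds_in_eInjective {S : Type u} [Semiring S] (hai : ∀ a : S, a + a = a)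
    (M : Type v) [AddCommMonoid M] [Module S M] :
    ∃ (Q : Type (max u v)) (_ : AddCommMonoid Q) (_ : Module S Q),
      EInjective S Q ∧ ∃ ι : M →ₗ[S] Q, Function.Injective ι := by
  classical
  refine ⟨MyQ S M, inferInstance, inferInstance, ?_, myIota M hai, myIota_inj M hai⟩
  intro B _ _ A hA
  constructor
  · intro φ
    refine ⟨myExt M hai hA (fun a => (φ a).1 1) (by
        show (φ (0 : A)).1 1 = ∅
        rw [map_zero]; rfl)
      (fun a a' => by
        show (φ (a + a')).1 1 = (φ a).1 1 ∪ (φ a').1 1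
        rw [map_add]; rfl), fun a => ?_⟩
    refine Subtype.ext (funext fun s => ?_)
    rw [myExt_val, dif_pos (A.smul_mem s a.2)]
    have e : (⟨s • (a : B), A.smul_mem s a.2⟩ : A) = s • a := rfl
    rw [e, map_smul]
    show (φ a).1 (1 * s) = (φ a).1 s
    rw [one_mul]
  · intro ψ₁ ψ₂ hagree
    set χ := myExt M hai hA (fun _ => (∅ : Set M)) rfl (by simp) with hχ
    have hvan : ∀ a ∈ A, χ a = 0 := fun a ha =>
      Subtype.ext (funext fun s => by
        rw [hχ, myExt_val, dif_pos (A.smul_mem s ha)]; rfl)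
    refine ⟨χ, χ, hvan, hvan, ?_⟩
    refine LinearMap.ext fun b => Subtype.ext (funext fun s => ?_)
    rw [LinearMap.add_apply, LinearMap.add_apply, MyQ.add_val, MyQ.add_val,
      hχ, myExt_val]
    by_cases h : s • b ∈ A
    · rw [dif_pos h]
      show (ψ₁ b).1 s ∪ ∅ = (ψ₂ b).1 s ∪ ∅
      rw [Set.union_empty, Set.union_empty]
      have e1 : (ψ₁ b).1 s = (ψ₁ (s • b)).1 1 := by
        rw [map_smul]
        show _ = (ψ₁ b).1 (1 * s)
        rw [one_mul]
      have e2 : (ψ₂ b).1 s = (ψ₂ (s • b)).1 1 := by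
        rw [map_smul]
        show _ = (ψ₂ b).1 (1 * s)
        rw [one_mul]
      rw [e1, e2, hagree _ h]
    · rw [dif_neg h, Set.union_univ, Set.union_univ]
end

section
/- Let D be an additively idempotent division semiring. Then there exists a left D-semimodule that is e-injective but not injective; hence the class of injective left D-semimodules is a proper subclass of the class of e-injective left D-semimodules. -/
universe u v w w'

/-!
Over an additively idempotent division semiring `D`, every join-semilattice with bottom `L`
is a `D`-semimodule with `d • x = x` for `d ≠ 0`. If `M` has a top element `⊤`, it is
e-injective: extend `φ : A → M` by `⊤` off `A`; this is linear because, `A` being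
subtractive, the complement of `A` absorbs addition. On the other hand the
non-distributive lattice `M₃ = {⊥, a, b, c, ⊤}` is not injective: it embeds into the
lattice `B₆` obtained by adjoining `x` with `x ≤ a`, `x ≤ b` and `x ⊔ c = ⊤`, and a
retraction `B₆ → M₃` would send `x` to some `p ≤ a ⊓ b = ⊥` with `p ⊔ c = ⊤`.
-/

theorem add_self_of_one_add_one_s11 {D : Type u} [Semiring D] {B : Type v} [AddCommMonoid B]
    [Module D B] (h : (1 : D) + 1 = 1) (x : B) : x + x = x := by
  simpa only [add_smul, one_smul] using congrArg (· • x) h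

theorem eq_zero_of_add_eq_zero_of_add_self {α : Type u} [AddMonoid α]
    (hα : ∀ a : α, a + a = a) {x y : α} (h : x + y = 0) : x = 0 :=
  calc x = x + (x + y) := by rw [h, add_zero]
    _ = 0 := by rw [← add_assoc, hα, h]

open Classical in
noncomputable abbrev idempotentModule {D : Type u} [Semiring D] [NoZeroDivisors D] [Nontrivial D]
    (hai : ∀ a : D, a + a = a) (L : Type v) [AddCommMonoid L] (hL : ∀ x : L, x + x = x) :
    Module D L where
  smul d x := if d = 0 then 0 else x
  one_smul x := if_neg one_ne_zero
  mul_smul d e x := by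
    change ite _ _ _ = ite _ _ (ite _ _ _)
    by_cases hd : d = 0 <;> by_cases he : e = 0 <;> simp [hd, he]
  smul_zero d := by
    change ite _ _ _ = _
    split_ifs <;> rfl
  smul_add d x y := by
    change ite _ _ _ = ite _ _ _ + ite _ _ _
    split_ifs <;> simp
  add_smul d e x := by
    change ite _ _ _ = ite _ _ _ + ite _ _ _
    by_cases hd : d = 0
    · simp [hd]
    by_cases he : e = 0
    · simp [he]
    have hde : d + e ≠ 0 := fun h => hd (eq_zero_of_add_eq_zero_of_add_self hai h)
    rw [if_neg hde, if_neg hd, if_neg he, hL]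
  zero_smul x := if_pos rfl

def AddMonoidHom.toLinearMapOfSMulEqSelf {D : Type u} [Semiring D] {M : Type v} {N : Type w}
    [AddCommMonoid M] [AddCommMonoid N] [Module D M] [Module D N]
    (hM : ∀ d : D, d ≠ 0 → ∀ x : M, d • x = x) (hN : ∀ d : D, d ≠ 0 → ∀ y : N, d • y = y)
    (f : M →+ N) : M →ₗ[D] N where
  __ := f
  map_smul' d x := by
    rcases eq_or_ne d 0 with rfl | hd
    · simp
    · simp [hM d hd, hN d hd]

namespace IsSubtractive

variable {S : Type u} [Semiring S] {B : Type v} [AddCommMonoid B] [Module S B]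
  {A : Submodule S B}

theorem add_mem_iff (hA : IsSubtractive A) (hB : ∀ x : B, x + x = x) {x y : B} :
    x + y ∈ A ↔ x ∈ A ∧ y ∈ A := by
  refine ⟨fun h => ⟨?_, ?_⟩, fun h => A.add_mem h.1 h.2⟩
  · exact hA (x + y) x h (by rwa [add_right_comm, hB])
  · exact hA (x + y) y h (by rwa [add_assoc, hB])

end IsSubtractive

section EInjective

variable {D : Type u} [DivisionSemiring D] {M : Type v} [AddCommMonoid M] [Module D M]

theorem smul_eq_self_of_absorbing {t : M} (ht : ∀ x : M, x + t = t) {d : D} (hd : d ≠ 0) :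
    d • t = t :=
  calc d • t = d • (d⁻¹ • t + t) := by rw [ht]
    _ = t := by rw [smul_add, smul_inv_smul₀ hd, add_comm, ht]

variable {B : Type w} [AddCommMonoid B] [Module D B] {A : Submodule D B}

open Classical in
noncomputable def extendByAbsorbing (hai : ∀ a : D, a + a = a) (hA : IsSubtractive A)
    (t : M) (ht : ∀ x : M, x + t = t) (φ : A →ₗ[D] M) : B →ₗ[D] M where
  toFun x := if h : x ∈ A then φ ⟨x, h⟩ else t
  map_add' x y := by
    by_cases hx : x ∈ A <;> by_cases hy : y ∈ A <;>
      simp only [hA.add_mem_iff (add_self_of_one_add_one_s11 (hai 1)), hx, hy, and_self,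
        and_false, false_and, dif_pos, dif_neg, not_false_eq_true, ht, add_comm t]
    exact φ.map_add ⟨x, hx⟩ ⟨y, hy⟩
  map_smul' d x := by
    rcases eq_or_ne d 0 with rfl | hd
    · simp only [zero_smul, A.zero_mem, dif_pos, RingHom.id_apply]
      exact φ.map_zero
    · by_cases hx : x ∈ A
      · simp only [A.smul_mem_iff hd, hx, dif_pos, RingHom.id_apply]
        exact φ.map_smul d ⟨x, hx⟩
      · simp only [A.smul_mem_iff hd, hx, dif_neg, not_false_eq_true, RingHom.id_apply,
          smul_eq_self_of_absorbing ht hd]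

variable {hai : ∀ a : D, a + a = a} {hA : IsSubtractive A} {t : M} {ht : ∀ x : M, x + t = t}

theorem extendByAbsorbing_apply_of_mem (φ : A →ₗ[D] M) (a : A) :
    extendByAbsorbing hai hA t ht φ a = φ a := by
  simp [extendByAbsorbing]

theorem extendByAbsorbing_apply_of_notMem (φ : A →ₗ[D] M) {x : B} (hx : x ∉ A) :
    extendByAbsorbing hai hA t ht φ x = t := by
  simp [extendByAbsorbing, hx]

end EInjective

theorem eInjective_of_absorbing {D : Type u} [DivisionSemiring D] {M : Type v}
    [AddCommMonoid M] [Module D M] (hai : ∀ a : D, a + a = a) (t : M)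
    (ht : ∀ x : M, x + t = t) : EInjective.{u, v, w} D M := by
  intro B _ _ A hA
  refine ⟨fun φ => ⟨extendByAbsorbing hai hA t ht φ, extendByAbsorbing_apply_of_mem φ⟩,
    fun ψ₁ ψ₂ h => ?_⟩
  -- `χ` vanishes on `A` and is `t` off `A`, where it absorbs both `ψ₁ x` and `ψ₂ x`.
  let χ := extendByAbsorbing hai hA t ht 0
  have hχ : ∀ x ∈ A, χ x = 0 := fun x hx => extendByAbsorbing_apply_of_mem 0 ⟨x, hx⟩
  refine ⟨χ, χ, hχ, hχ, LinearMap.ext fun x => ?_⟩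
  by_cases hx : x ∈ A
  · simp only [LinearMap.add_apply, h x hx]
  · simp only [LinearMap.add_apply, χ, extendByAbsorbing_apply_of_notMem 0 hx, ht]

inductive MThree : Type u
  | bot | a | b | c | top
  deriving DecidableEq

namespace MThree

instance : Fintype MThree.{u} :=
  ⟨{bot, a, b, c, top}, by rintro (_ | _ | _ | _ | _) <;> decide⟩

def join : MThree.{u} → MThree.{u} → MThree.{u}
  | bot, y | y, bot => y
  | y, z => if y = z then y else top

instance : Zero MThree.{u} := ⟨bot⟩

instance : Add MThree.{u} := ⟨join⟩

instance : AddCommMonoid MThree.{u} where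
  add_assoc := by decide
  zero_add := by decide
  add_zero := by decide
  add_comm := by decide
  nsmul := nsmulRec

theorem add_self : ∀ x : MThree.{u}, x + x = x := by decide

theorem add_top : ∀ x : MThree.{u}, x + top = top := by decide

theorem add_c_ne_top_of_le_a_of_le_b :
    ∀ p : MThree.{u}, p + a = a → p + b = b → p + c ≠ top := by
  decide

def lift : MThree.{u} →+ MThree.{v} where
  toFun
    | bot => bot | a => a | b => b | c => c | top => top
  map_zero' := rfl
  map_add' := by decide

end MThree

inductive BSix : Type u
  | bot | x | a | b | c | top
  deriving DecidableEq

namespace BSix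

instance : Fintype BSix.{u} :=
  ⟨{bot, x, a, b, c, top}, by rintro (_ | _ | _ | _ | _ | _) <;> decide⟩

def join : BSix.{u} → BSix.{u} → BSix.{u}
  | bot, y | y, bot => y
  | x, y | y, x => if y = c then top else y
  | y, z => if y = z then y else top

instance : Zero BSix.{u} := ⟨bot⟩

instance : Add BSix.{u} := ⟨join⟩

instance : AddCommMonoid BSix.{u} where
  add_assoc := by decide
  zero_add := by decide
  add_zero := by decide
  add_comm := by decide
  nsmul := nsmulRec

theorem add_self : ∀ y : BSix.{u}, y + y = y := by decide

end BSix

def MThree.toBSix : MThree.{u} →+ BSix.{v} where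
  toFun
    | bot => .bot | a => .a | b => .b | c => .c | top => .top
  map_zero' := rfl
  map_add' := by decide

theorem MThree.toBSix_injective : Function.Injective MThree.toBSix.{u, v} := by
  decide

theorem MThree.not_sInjective {D : Type u} [DivisionSemiring D] (hai : ∀ a : D, a + a = a)
    [Module D MThree.{u}] (hM : ∀ d : D, d ≠ 0 → ∀ x : MThree.{u}, d • x = x) :
    ¬ SInjective.{u, u, w, w'} D MThree.{u} := by
  intro hinj
  let := idempotentModule hai MThree.{w} add_self
  let := idempotentModule hai BSix.{w'} BSix.add_self
  obtain ⟨ψ, hψ⟩ := hinj MThree BSix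
    (toBSix.toLinearMapOfSMulEqSelf (fun _ hd _ => if_neg hd) fun _ hd _ => if_neg hd)
    toBSix_injective (lift.toLinearMapOfSMulEqSelf (fun _ hd _ => if_neg hd) hM)
  have ha : ψ .a = a := hψ a
  have hb : ψ .b = b := hψ b
  have hc : ψ .c = c := hψ c
  have htop : ψ .top = top := hψ top
  have hxa : ψ .x + a = a := by rw [← ha, ← map_add]; rfl
  have hxb : ψ .x + b = b := by rw [← hb, ← map_add]; rfl
  have hxc : ψ .x + c = top := by rw [← hc, ← htop, ← map_add]; rfl
  exact add_c_ne_top_of_le_a_of_le_b (ψ .x) hxa hxb hxc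

/-- Proposition-Example 4.6: over an additively idempotent division semiring there is a
semimodule that is e-injective but not injective. -/
theorem exists_eInjective_not_injective {D : Type u} [DivisionSemiring D]
    (hai : ∀ a : D, a + a = a) :
    ∃ (M : Type u) (_ : AddCommMonoid M) (_ : Module D M),
      EInjective D M ∧ ¬ SInjective D M := by
  let := idempotentModule hai MThree.{u} MThree.add_self
  exact ⟨MThree, inferInstance, inferInstance, eInjective_of_absorbing hai .top MThree.add_top,
    MThree.not_sInjective hai fun _ hd _ => if_neg hd⟩
end
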